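/- The function $\zeta(u) = e^u \operatorname{erfc}(\sqrt{u})$ satisfies $\zeta(u) = \int_0^\infty y e^{-uy} \frac{1}{\pi y^{3/2}(y+1)}\, dy$ for all $u > 0$; in particular $\zeta$ is completely monotone. -/

import Mathlib

open Set Real

/-- The complementary error function. -/
noncomputable def erfc (x : ℝ) : ℝ := (2 / Real.sqrt π) * ∫ t in Ioi x, Real.exp (-t ^ 2)

/-- `ζ(u) = e^u erfc(√u)`. -/
noncomputable def zeta (u : ℝ) : ℝ := Real.exp u * erfc (Real.sqrt u)

/-!
Let `w(y) = y^(-1/2) / (π (1 + y))` and `M₀(u) = ∫₀^∞ e^(-uy) w(y) dy`. Since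
`y w(y) = y^(-1/2)/π - w(y)` and `∫₀^∞ y^(-1/2) e^(-uy) dy = √(π/u)`, differentiating under
the integral gives `M₀' = M₀ - 1/√(πu)`, which is also the equation satisfied by `ζ`.
Hence `e^(-u) M₀(u) - erfc(√u)` is constant on `(0, ∞)`, and it vanishes because both
terms tend to `0`. Differentiating `n` times under the integral,
`(-1)^n ζ⁽ⁿ⁾(u) = ∫₀^∞ yⁿ e^(-uy) w(y) dy ≥ 0`.
-/

open MeasureTheory Filter Topology

noncomputable def laplaceMoment (w : ℝ → ℝ) (n : ℕ) (u : ℝ) : ℝ :=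
  ∫ y in Ioi 0, y ^ n * exp (-u * y) * w y

section LaplaceMoment

variable {w : ℝ → ℝ}

theorem hasDerivAt_laplaceMoment
    (hw : ∀ (n : ℕ) {c : ℝ}, 0 < c → IntegrableOn (fun y => y ^ n * exp (-c * y) * w y) (Ioi 0))
    (n : ℕ) {u : ℝ} (hu : 0 < u) :
    HasDerivAt (laplaceMoment w n) (-laplaceMoment w (n + 1) u) u := by
  have hmeas : ∀ᶠ x in 𝓝 u, AEStronglyMeasurable
      (fun y => y ^ n * exp (-x * y) * w y) (volume.restrict (Ioi 0)) := by
    filter_upwards [Ioi_mem_nhds hu] with x hx using (hw n hx).aestronglyMeasurable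
  have hbound : ∀ᵐ y ∂volume.restrict (Ioi 0), ∀ x ∈ Metric.ball u (u / 2),
      ‖-(y ^ (n + 1) * exp (-x * y) * w y)‖ ≤ |y ^ (n + 1) * exp (-(u / 2) * y) * w y| := by
    filter_upwards [ae_restrict_mem measurableSet_Ioi] with y (hy : 0 < y) x hx
    have hxu : u / 2 ≤ x := by
      have := (abs_lt.1 (mem_ball_iff_norm.1 hx)).1
      linarith
    rw [norm_neg, Real.norm_eq_abs, abs_mul, abs_mul (_ * _)]
    gcongr
  have hderiv : ∀ᵐ y ∂volume.restrict (Ioi 0), ∀ x ∈ Metric.ball u (u / 2),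
      HasDerivAt (fun x => y ^ n * exp (-x * y) * w y)
        (-(y ^ (n + 1) * exp (-x * y) * w y)) x := by
    refine ae_of_all _ fun y x _ => ?_
    have hlin : HasDerivAt (fun x : ℝ => -x * y) (-y) x := by
      simpa using (hasDerivAt_neg x).mul_const y
    exact ((hlin.exp.const_mul (y ^ n)).mul_const (w y)).congr_deriv (by ring)
  have key := hasDerivAt_integral_of_dominated_loc_of_deriv_le
    (Metric.ball_mem_nhds u (half_pos hu)) hmeas (hw n hu)
    (hw (n + 1) hu).aestronglyMeasurable.neg hbound
    (hw (n + 1) (half_pos hu)).abs hderiv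
  rw [laplaceMoment, ← integral_neg]
  exact key.2

theorem neg_one_pow_mul_iteratedDeriv_eq_laplaceMoment
    (hw : ∀ (n : ℕ) {c : ℝ}, 0 < c → IntegrableOn (fun y => y ^ n * exp (-c * y) * w y) (Ioi 0))
    {f : ℝ → ℝ} (hf : EqOn f (laplaceMoment w 0) (Ioi 0)) (n : ℕ) {u : ℝ} (hu : 0 < u) :
    (-1) ^ n * iteratedDeriv n f u = laplaceMoment w n u := by
  induction n generalizing u with
  | zero => simpa using hf hu
  | succ n ih =>
    have hev : iteratedDeriv n f =ᶠ[𝓝 u] fun v => (-1) ^ n * laplaceMoment w n v := by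
      filter_upwards [Ioi_mem_nhds hu] with v hv
      rw [← ih hv, ← mul_assoc, ← mul_pow, neg_one_mul, neg_neg, one_pow, one_mul]
    rw [iteratedDeriv_succ, hev.deriv_eq, ((hasDerivAt_laplaceMoment hw n hu).const_mul _).deriv]
    rcases neg_one_pow_eq_or ℝ n with h | h <;> simp [pow_succ, h]

theorem laplaceMoment_nonneg (hw : ∀ y, 0 < y → 0 ≤ w y) (n : ℕ) (u : ℝ) :
    0 ≤ laplaceMoment w n u :=
  setIntegral_nonneg measurableSet_Ioi fun y (hy : 0 < y) => by have := hw y hy; positivity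

theorem laplaceMoment_le_of_le (hw₀ : ∀ y, 0 < y → 0 ≤ w y) (n : ℕ)
    (hw : ∀ {c : ℝ}, 0 < c → IntegrableOn (fun y => y ^ n * exp (-c * y) * w y) (Ioi 0))
    {u v : ℝ} (hu : 0 < u) (huv : u ≤ v) :
    laplaceMoment w n v ≤ laplaceMoment w n u := by
  refine setIntegral_mono_on (hw (hu.trans_le huv)) (hw hu) measurableSet_Ioi
    fun y (hy : 0 < y) => ?_
  have := hw₀ y hy
  gcongr

end LaplaceMoment

theorem hasDerivAt_integral_Ioi {E : Type*} [NormedAddCommGroup E] [NormedSpace ℝ E]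
    [CompleteSpace E] {f : ℝ → E} (hf : Continuous f) (hfi : Integrable f) (x : ℝ) :
    HasDerivAt (fun a => ∫ t in Ioi a, f t) (-f x) x := by
  have hsplit : (fun a => ∫ t in Ioi a, f t) =
      fun a => (∫ t in Ioi 0, f t) - ∫ t in 0..a, f t := by
    funext a
    rw [← intervalIntegral.integral_Ioi_sub_Ioi' hfi.integrableOn hfi.integrableOn, sub_sub_cancel]
  rw [hsplit, ← zero_sub]
  exact (hasDerivAt_const x _).sub (intervalIntegral.integral_hasDerivAt_right
    (hf.intervalIntegrable 0 x) hf.aestronglyMeasurable.stronglyMeasurableAtFilter hf.continuousAt)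

theorem integrable_exp_neg_sq : Integrable fun t : ℝ => exp (-t ^ 2) := by
  simpa using integrable_exp_neg_mul_sq one_pos

theorem hasDerivAt_erfc (x : ℝ) : HasDerivAt erfc (-(2 / √π * exp (-x ^ 2))) x := by
  rw [← mul_neg]
  exact (hasDerivAt_integral_Ioi (by fun_prop) integrable_exp_neg_sq x).const_mul _

theorem tendsto_erfc_atTop : Tendsto erfc atTop (𝓝 0) := by
  have h := (tendsto_integral_Ioi_zero (f := fun t : ℝ => exp (-t ^ 2)) (μ := volume)
    tendsto_id).const_mul (2 / √π)
  rwa [mul_zero] at h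

noncomputable def zetaDensity (y : ℝ) : ℝ := y ^ (-(1 / 2) : ℝ) / (π * (1 + y))

theorem zetaDensity_nonneg {y : ℝ} (hy : 0 ≤ y) : 0 ≤ zetaDensity y := by
  unfold zetaDensity
  positivity

theorem zetaDensity_le {y : ℝ} (hy : 0 ≤ y) : zetaDensity y ≤ y ^ (-(1 / 2) : ℝ) / π :=
  div_le_div_of_nonneg_left (by positivity) pi_pos (le_mul_of_one_le_right pi_pos.le (by linarith))

theorem mul_zetaDensity {y : ℝ} (hy : 0 < y) :
    y * zetaDensity y = y ^ (-(1 / 2) : ℝ) / π - zetaDensity y := by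
  unfold zetaDensity
  field_simp
  ring

theorem zetaDensity_eq {y : ℝ} (hy : 0 < y) :
    zetaDensity y = y * (1 / (π * y ^ (3 / 2 : ℝ) * (y + 1))) := by
  have h32 : y ^ (3 / 2 : ℝ) = y * y ^ (1 / 2 : ℝ) := by
    rw [show (3 / 2 : ℝ) = 1 + 1 / 2 by norm_num, rpow_add hy, rpow_one]
  have : 0 < y ^ (1 / 2 : ℝ) := rpow_pos_of_pos hy _
  rw [zetaDensity, h32, rpow_neg hy.le]
  field_simp
  ring

theorem integrableOn_rpow_mul_exp_neg_mul {s c : ℝ} (hs : -1 < s) (hc : 0 < c) :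
    IntegrableOn (fun y : ℝ => y ^ s * exp (-c * y)) (Ioi 0) := by
  simpa using integrableOn_rpow_mul_exp_neg_mul_rpow hs one_pos hc

theorem integrableOn_laplace_zetaDensity (n : ℕ) {c : ℝ} (hc : 0 < c) :
    IntegrableOn (fun y => y ^ n * exp (-c * y) * zetaDensity y) (Ioi 0) := by
  have hcont : ContinuousOn (fun y => y ^ n * exp (-c * y) * zetaDensity y) (Ioi 0) := by
    refine ContinuousOn.mul (by fun_prop) (ContinuousOn.div ?_ (by fun_prop) fun y hy => ?_)
    · exact continuousOn_id.rpow_const fun y hy => Or.inl (ne_of_gt hy)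
    · have : (0 : ℝ) < y := hy
      positivity
  refine Integrable.mono' ((integrableOn_rpow_mul_exp_neg_mul (s := n - 1 / 2)
    (by linarith [n.cast_nonneg (α := ℝ)]) hc).div_const π)
    (hcont.aestronglyMeasurable measurableSet_Ioi) ?_
  filter_upwards [ae_restrict_mem measurableSet_Ioi] with y (hy : 0 < y)
  rw [Real.norm_eq_abs, abs_of_nonneg (by have := zetaDensity_nonneg hy.le; positivity)]
  calc y ^ n * exp (-c * y) * zetaDensity y
        ≤ y ^ n * exp (-c * y) * (y ^ (-(1 / 2) : ℝ) / π) := by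
        gcongr
        exact zetaDensity_le hy.le
    _ = y ^ ((n : ℝ) - 1 / 2) * exp (-c * y) / π := by
        rw [sub_eq_add_neg, rpow_add hy, rpow_natCast]
        ring

theorem integral_rpow_neg_half_mul_exp {u : ℝ} (hu : 0 < u) :
    ∫ y in Ioi 0, y ^ (-(1 / 2) : ℝ) * exp (-u * y) = √π / √u := by
  have h := integral_rpow_mul_exp_neg_mul_Ioi one_half_pos hu
  rw [show (1 / 2 : ℝ) - 1 = -(1 / 2) by norm_num] at h
  simp_rw [neg_mul] at h ⊢
  rw [h, Gamma_one_half_eq, ← sqrt_eq_rpow, one_div, sqrt_inv, inv_mul_eq_div]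

theorem laplaceMoment_zetaDensity_one {u : ℝ} (hu : 0 < u) :
    laplaceMoment zetaDensity 1 u = (√π * √u)⁻¹ - laplaceMoment zetaDensity 0 u := by
  have hsplit : laplaceMoment zetaDensity 1 u = ∫ y in Ioi 0,
      (y ^ (-(1 / 2) : ℝ) * exp (-u * y) / π - y ^ 0 * exp (-u * y) * zetaDensity y) :=
    setIntegral_congr_fun measurableSet_Ioi fun y (hy : 0 < y) => by
      rw [pow_one, pow_zero, one_mul, mul_right_comm, mul_zetaDensity hy]
      ring
  rw [hsplit, integral_sub ((integrableOn_rpow_mul_exp_neg_mul (by norm_num) hu).div_const π)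
    (integrableOn_laplace_zetaDensity 0 hu), integral_div, integral_rpow_neg_half_mul_exp hu]
  have hπ : √π * √π = π := mul_self_sqrt pi_pos.le
  have : 0 < √π := sqrt_pos.2 pi_pos
  have : 0 < √u := sqrt_pos.2 hu
  congr 1
  field_simp
  linear_combination hπ

theorem hasDerivAt_exp_neg_mul_laplaceMoment_zetaDensity_sub_erfc_sqrt {v : ℝ} (hv : 0 < v) :
    HasDerivAt (fun v => exp (-v) * laplaceMoment zetaDensity 0 v - erfc √v) 0 v := by
  have hM := hasDerivAt_laplaceMoment integrableOn_laplace_zetaDensity 0 hv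
  rw [zero_add, laplaceMoment_zetaDensity_one hv] at hM
  refine (((hasDerivAt_neg v).exp.mul hM).sub
    ((hasDerivAt_erfc √v).comp v (hasDerivAt_sqrt hv.ne'))).congr_deriv ?_
  have : 0 < √π := sqrt_pos.2 pi_pos
  have : 0 < √v := sqrt_pos.2 hv
  rw [sq_sqrt hv.le]
  field_simp
  ring

theorem tendsto_exp_neg_mul_laplaceMoment_zetaDensity :
    Tendsto (fun v => exp (-v) * laplaceMoment zetaDensity 0 v) atTop (𝓝 0) := by
  have hnonneg := fun y (hy : 0 < y) => zetaDensity_nonneg hy.le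
  refine squeeze_zero' (Eventually.of_forall fun v => mul_nonneg (exp_nonneg _)
    (laplaceMoment_nonneg hnonneg 0 v)) ?_
    (by simpa using tendsto_exp_neg_atTop_nhds_zero.mul_const (laplaceMoment zetaDensity 0 1))
  filter_upwards [eventually_ge_atTop 1] with v hv
  exact mul_le_mul_of_nonneg_left
    (laplaceMoment_le_of_le hnonneg 0 (integrableOn_laplace_zetaDensity 0) one_pos hv)
    (exp_nonneg _)

theorem zeta_eq_laplaceMoment {u : ℝ} (hu : 0 < u) :
    zeta u = laplaceMoment zetaDensity 0 u := by
  set h : ℝ → ℝ := fun v => exp (-v) * laplaceMoment zetaDensity 0 v - erfc √v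
  have hconst : ∀ v, u ≤ v → h v = h u := fun v huv =>
    constant_of_has_deriv_right_zero
      (fun x hx => (hasDerivAt_exp_neg_mul_laplaceMoment_zetaDensity_sub_erfc_sqrt
        (hu.trans_le hx.1)).continuousAt.continuousWithinAt)
      (fun x hx => (hasDerivAt_exp_neg_mul_laplaceMoment_zetaDensity_sub_erfc_sqrt
        (hu.trans_le hx.1)).hasDerivWithinAt) v ⟨huv, le_rfl⟩
  have hlim : Tendsto h atTop (𝓝 0) := by
    simpa using tendsto_exp_neg_mul_laplaceMoment_zetaDensity.sub
      (tendsto_erfc_atTop.comp tendsto_sqrt_atTop)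
  have hzero : h u = 0 := tendsto_nhds_unique
    ((tendsto_congr' ((eventually_ge_atTop u).mono hconst)).2 tendsto_const_nhds) hlim
  rw [zeta, ← sub_eq_zero.1 hzero, ← mul_assoc, ← exp_add, add_neg_cancel, exp_zero, one_mul]

theorem stmt8 :
    (∀ u : ℝ, 0 < u →
      zeta u = ∫ y in Ioi (0:ℝ), y * Real.exp (-u * y) * (1 / (π * y ^ (3/2 : ℝ) * (y + 1)))) ∧
    (∀ n : ℕ, ∀ u : ℝ, 0 < u → 0 ≤ (-1 : ℝ) ^ n * iteratedDeriv n zeta u) := by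
  have hzeta : EqOn zeta (laplaceMoment zetaDensity 0) (Ioi 0) := fun _ => zeta_eq_laplaceMoment
  refine ⟨fun u hu => ?_, fun n u hu => ?_⟩
  · rw [hzeta hu]
    refine setIntegral_congr_fun measurableSet_Ioi fun y (hy : 0 < y) => ?_
    rw [pow_zero, one_mul, zetaDensity_eq hy]
    ring
  · rw [neg_one_pow_mul_iteratedDeriv_eq_laplaceMoment integrableOn_laplace_zetaDensity hzeta n hu]
    exact laplaceMoment_nonneg (fun y hy => zetaDensity_nonneg hy.le) n u
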